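/- arXiv:2602.17401 — 2 statements merged into one kernel-verified Lean document; each statement's English description precedes it below -/
import Mathlib

section
/- Let t, n ≥ 1 be integers, N = tn, and let B be an n×n 0-1 matrix with |B| ones. Then the number of N×N permutation matrices A whose support is contained in the union of the blocks I_a × I_b over pairs (a,b) with B_{a,b} = 1 is at most (t!)^n · (|B|/n)^N. -/
open Filter

noncomputable section

/-- An `n × n` 0-1 matrix `A` contains the `k × k` pattern `P` if there are strictly
increasing rows and columns selecting a submatrix that dominates `P`. -/
def Contains {k n : ℕ} (P : Matrix (Fin k) (Fin k) Bool)
    (A : Matrix (Fin n) (Fin n) Bool) : Prop :=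
  ∃ r : Fin k → Fin n, ∃ c : Fin k → Fin n,
    StrictMono r ∧ StrictMono c ∧ ∀ i j, P i j = true → A (r i) (c j) = true

/-- `A` avoids the pattern `P`. -/
def Avoids {k n : ℕ} (P : Matrix (Fin k) (Fin k) Bool)
    (A : Matrix (Fin n) (Fin n) Bool) : Prop := ¬ Contains P A

/-- The permutation matrix of a permutation. -/
def permMatrix {n : ℕ} (σ : Equiv.Perm (Fin n)) : Matrix (Fin n) (Fin n) Bool :=
  fun i j => decide (σ i = j)

/-- `A` is a permutation matrix. -/
def IsPermMatrix {n : ℕ} (A : Matrix (Fin n) (Fin n) Bool) : Prop :=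
  ∃ σ : Equiv.Perm (Fin n), A = permMatrix σ

/-- Number of ones of a 0-1 matrix. -/
def numOnes {m n : ℕ} (A : Matrix (Fin m) (Fin n) Bool) : ℕ :=
  (Finset.univ.filter fun p : Fin m × Fin n => A p.1 p.2 = true).card

/-- `SW P n = S_P(n)`, the number of `n × n` permutation matrices avoiding `P`. -/
def SW {k : ℕ} (P : Matrix (Fin k) (Fin k) Bool) (n : ℕ) : ℕ :=
  Nat.card {A : Matrix (Fin n) (Fin n) Bool // IsPermMatrix A ∧ Avoids P A}

/-- `exFH P n = ex(n, P)`, the maximum number of ones in an `n × n` 0-1 matrix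
avoiding `P`. -/
def exFH {k : ℕ} (P : Matrix (Fin k) (Fin k) Bool) (n : ℕ) : ℕ :=
  sSup {m : ℕ | ∃ A : Matrix (Fin n) (Fin n) Bool, Avoids P A ∧ numOnes A = m}

/-- `F c = inf over positive integers t of (t!)^(1/t) * 15^(c/t) / c`. -/
def F (c : ℝ) : ℝ :=
  ⨅ t : ℕ+, ((t : ℕ).factorial : ℝ) ^ ((1 : ℝ) / (t : ℕ)) * (15 : ℝ) ^ (c / (t : ℕ)) / c

/-- The block (among `n` consecutive blocks of length `t`) containing a given
index of `Fin (t * n)`. -/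
def blockOf {t n : ℕ} (ht : 0 < t) (i : Fin (t * n)) : Fin n :=
  ⟨(i : ℕ) / t, by
    rw [Nat.div_lt_iff_lt_mul ht]
    exact lt_of_lt_of_le i.isLt (le_of_eq (mul_comm t n))⟩

open Classical in
/-- The `t`-contraction of an `(t*n) × (t*n)` 0-1 matrix: entry `(a,b)` is 1 iff
the block `I_a × I_b` contains a one. -/
def contMat {t n : ℕ} (ht : 0 < t) (A : Matrix (Fin (t * n)) (Fin (t * n)) Bool) :
    Matrix (Fin n) (Fin n) Bool :=
  fun a b => decide (∃ i j, blockOf ht i = a ∧ blockOf ht j = b ∧ A i j = true)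

end

/-! Identify `Fin (t * n)` with `Fin n × Fin t` through the blocks. A lift `σ` is determined by
the block `g i` containing `σ i`, subject to `B (blockOf i) (g i) = 1`, which leaves `r a` choices
for each of the `t` indices `i` of the row block `a` (`r a` the `a`-th row sum of `B`), together
with, for every column block `b`, the injection of the fibre `g⁻¹ b` into the `t` positions of
`I_b`, of which there are at most `t!`. Hence the count is at most `(t!)^n ∏ₐ (r a)^t`, and AM-GM
bounds `∏ₐ r a` by `(|B| / n)^n`. -/

open Finset
open scoped Nat

theorem Nat.descFactorial_le_factorial (n k : ℕ) : n.descFactorial k ≤ n ! := by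
  rcases le_or_gt k n with h | h
  · rw [← factorial_mul_descFactorial h]
    exact Nat.le_mul_of_pos_left _ (factorial_pos _)
  · simp [descFactorial_eq_zero_iff_lt.mpr h]

theorem Real.prod_le_mean_pow {ι : Type*} (s : Finset ι) {z : ι → ℝ} (hz : ∀ i ∈ s, 0 ≤ z i) :
    ∏ i ∈ s, z i ≤ ((∑ i ∈ s, z i) / #s) ^ #s := by
  rcases s.eq_empty_or_nonempty with rfl | hs
  · simp
  have hs' : #s ≠ 0 := hs.card_pos.ne'
  have amgm := Real.geom_mean_le_arith_mean_weighted s (fun _ => (#s : ℝ)⁻¹) z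
    (fun _ _ => by positivity) (by simp [hs']) hz
  rw [Real.finsetProd_rpow s z hz, ← Finset.mul_sum, inv_mul_eq_div] at amgm
  calc ∏ i ∈ s, z i = ((∏ i ∈ s, z i) ^ (#s : ℝ)⁻¹) ^ #s :=
        (Real.rpow_inv_natCast_pow (prod_nonneg hz) hs').symm
    _ ≤ _ := pow_le_pow_left₀ (Real.rpow_nonneg (prod_nonneg hz) _) amgm _

section Embeddings

variable {α β γ : Type*} [Fintype α] [Fintype β] [Fintype γ]

theorem card_embedding_prod_fst_eq_le (g : α → β) :
    Nat.card {f : α ↪ β × γ // Prod.fst ∘ f = g} ≤ (Nat.card γ)! ^ Nat.card β := by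
  classical
  let restrict (f : {f : α ↪ β × γ // Prod.fst ∘ f = g}) (b : β) : {a // g a = b} ↪ γ :=
    ⟨fun a => (f.1 a).2, fun a a' h => Subtype.ext <| f.1.injective <|
      Prod.ext ((congrFun f.2 a).trans (a.2.trans (a'.2.symm.trans (congrFun f.2 a').symm))) h⟩
  have restrict_injective : Function.Injective restrict := by
    intro f f' h
    refine Subtype.ext <| DFunLike.ext _ _ fun a => Prod.ext ?_ ?_
    · exact (congrFun f.2 a).trans (congrFun f'.2 a).symm
    · exact DFunLike.congr_fun (congrFun h (g a)) ⟨a, rfl⟩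
  calc Nat.card {f : α ↪ β × γ // Prod.fst ∘ f = g}
      ≤ Nat.card (∀ b, {a // g a = b} ↪ γ) :=
        Nat.card_le_card_of_injective _ restrict_injective
    _ = ∏ b, (Nat.card γ).descFactorial (Nat.card {a // g a = b}) := by
        rw [Nat.card_pi]
        simp only [Nat.card_eq_fintype_card, Fintype.card_embedding_eq]
    _ ≤ ∏ _b : β, (Nat.card γ)! := prod_le_prod' fun _ _ => Nat.descFactorial_le_factorial _ _
    _ = (Nat.card γ)! ^ Nat.card β := by simp only [prod_const, card_univ, Nat.card_eq_fintype_card]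

theorem card_embedding_prod_fst_rel_le (R : α → β → Prop) :
    Nat.card {f : α ↪ β × γ // ∀ a, R a (f a).1} ≤
      (∏ a, Nat.card {b // R a b}) * (Nat.card γ)! ^ Nat.card β := by
  classical
  let fstComp (f : {f : α ↪ β × γ // ∀ a, R a (f a).1}) : {g : α → β // ∀ a, R a (g a)} :=
    ⟨Prod.fst ∘ f.1, f.2⟩
  have card_fiber_le (g) : Nat.card {f // fstComp f = g} ≤ (Nat.card γ)! ^ Nat.card β :=
    (Nat.card_le_card_of_injective (fun f => (⟨f.1.1, congrArg Subtype.val f.2⟩ :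
        {f : α ↪ β × γ // Prod.fst ∘ f = g.1}))
      fun f f' h => Subtype.ext <| Subtype.ext <| by simpa using h).trans
      (card_embedding_prod_fst_eq_le g.1)
  calc Nat.card {f : α ↪ β × γ // ∀ a, R a (f a).1}
      = ∑ g, Nat.card {f // fstComp f = g} := by
        rw [← Nat.card_sigma]; exact Nat.card_congr (Equiv.sigmaFiberEquiv fstComp).symm
    _ ≤ ∑ _g : {g : α → β // ∀ a, R a (g a)}, (Nat.card γ)! ^ Nat.card β :=
        sum_le_sum fun g _ => card_fiber_le g
    _ = (∏ a, Nat.card {b // R a b}) * (Nat.card γ)! ^ Nat.card β := by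
        rw [sum_const, card_univ, smul_eq_mul, ← Nat.card_eq_fintype_card,
          Nat.card_congr Equiv.subtypePiEquivPi, Nat.card_pi]

end Embeddings

theorem numOnes_eq_sum_card_row {m n : ℕ} (A : Matrix (Fin m) (Fin n) Bool) :
    numOnes A = ∑ a, Nat.card {b // A a b = true} := by
  rw [numOnes, card_filter, Fintype.sum_prod_type]
  refine sum_congr rfl fun a _ => ?_
  rw [Nat.card_eq_fintype_card, Fintype.card_subtype, card_filter]

section Blocks

variable {t n : ℕ}

-- `(blockEquiv t n i).1` is `blockOf ht i` by definition (both are `i / t`).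
def blockEquiv (t n : ℕ) : Fin (t * n) ≃ Fin n × Fin t :=
  (finCongr (Nat.mul_comm t n)).trans finProdFinEquiv.symm

theorem card_lifts_le_card_perm (ht : 0 < t) (B : Matrix (Fin n) (Fin n) Bool) :
    Nat.card {A : Matrix (Fin (t * n)) (Fin (t * n)) Bool //
        IsPermMatrix A ∧ ∀ i j, A i j = true → B (blockOf ht i) (blockOf ht j) = true} ≤
      Nat.card {σ : Equiv.Perm (Fin (t * n)) //
        ∀ i, B (blockOf ht i) (blockOf ht (σ i)) = true} := by
  refine Nat.card_le_card_of_surjective (fun σ => ⟨permMatrix σ.1, ⟨σ.1, rfl⟩, ?_⟩) ?_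
  · intro i j hij
    simp only [permMatrix, decide_eq_true_eq] at hij
    exact hij ▸ σ.2 i
  · rintro ⟨A, ⟨σ, rfl⟩, hA⟩
    exact ⟨⟨σ, fun i => hA i (σ i) (by simp [permMatrix])⟩, rfl⟩

theorem card_lifts_le_prod (ht : 0 < t) (B : Matrix (Fin n) (Fin n) Bool) :
    Nat.card {A : Matrix (Fin (t * n)) (Fin (t * n)) Bool //
        IsPermMatrix A ∧ ∀ i j, A i j = true → B (blockOf ht i) (blockOf ht j) = true} ≤
      (∏ a, Nat.card {b // B a b = true} ^ t) * t ! ^ n := by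
  let E := blockEquiv t n
  calc _ ≤ Nat.card {σ : Equiv.Perm (Fin (t * n)) //
          ∀ i, B (blockOf ht i) (blockOf ht (σ i)) = true} := card_lifts_le_card_perm ht B
    _ ≤ Nat.card {f : Fin (t * n) ↪ Fin n × Fin t // ∀ i, B (blockOf ht i) (f i).1 = true} :=
        Nat.card_le_card_of_injective (fun σ => ⟨(σ.1.trans E).toEmbedding, σ.2⟩)
          fun σ σ' h => Subtype.ext <| Equiv.ext fun i => E.injective <| by
            simpa using DFunLike.congr_fun (Subtype.ext_iff.mp h) i
    _ ≤ (∏ i, Nat.card {b // B (blockOf ht i) b = true}) * (Nat.card (Fin t))! ^ Nat.card (Fin n) :=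
        card_embedding_prod_fst_rel_le fun i b => B (blockOf ht i) b = true
    _ = (∏ a, Nat.card {b // B a b = true} ^ t) * t ! ^ n := by
        rw [Fintype.prod_equiv E (fun i => Nat.card {b // B (blockOf ht i) b = true})
            (fun p => Nat.card {b // B p.1 b = true}) fun i => rfl,
          Fintype.prod_prod_type]
        simp

end Blocks

theorem lifts_card_le_general (t n : ℕ) (ht : 0 < t)
    (B : Matrix (Fin n) (Fin n) Bool) :
    (Nat.card {A : Matrix (Fin (t * n)) (Fin (t * n)) Bool //
        IsPermMatrix A ∧
          ∀ i j, A i j = true → B (blockOf ht i) (blockOf ht j) = true} : ℝ) ≤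
      (t.factorial : ℝ) ^ n * ((numOnes B : ℝ) / n) ^ (t * n) := by
  have amgm : ∏ a, (Nat.card {b // B a b = true} : ℝ) ≤ ((numOnes B : ℝ) / n) ^ n := by
    rw [numOnes_eq_sum_card_row, Nat.cast_sum]
    simpa only [card_univ, Fintype.card_fin] using
      Real.prod_le_mean_pow univ fun a _ => (Nat.card {b // B a b = true}).cast_nonneg
  calc (Nat.card _ : ℝ) ≤ (∏ a, (Nat.card {b // B a b = true} : ℝ) ^ t) * (t ! : ℝ) ^ n := by
        exact_mod_cast card_lifts_le_prod ht B
    _ = (t ! : ℝ) ^ n * (∏ a, (Nat.card {b // B a b = true} : ℝ)) ^ t := by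
        rw [prod_pow, mul_comm]
    _ ≤ (t ! : ℝ) ^ n * (((numOnes B : ℝ) / n) ^ n) ^ t := by gcongr
    _ = (t.factorial : ℝ) ^ n * ((numOnes B : ℝ) / n) ^ (t * n) := by rw [← pow_mul, mul_comm n t]

theorem lifts_card_le (t n : ℕ) (ht : 0 < t) (hn : 0 < n)
    (B : Matrix (Fin n) (Fin n) Bool) :
    (Nat.card {A : Matrix (Fin (t * n)) (Fin (t * n)) Bool //
        IsPermMatrix A ∧
          ∀ i j, A i j = true → B (blockOf ht i) (blockOf ht j) = true} : ℝ) ≤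
      (t.factorial : ℝ) ^ n * ((numOnes B : ℝ) / n) ^ (t * n) :=
  lifts_card_le_general t n ht B
end

section
/- Let P be a permutation matrix and let t, n ≥ 1 be integers with N = tn. Then S_P(N) ≤ Σ_{B ∈ T_n(P)} |L_t(B)|, i.e., the number of N×N permutation matrices avoiding P is at most the sum, over all n×n 0-1 matrices B avoiding P, of the number of N×N permutation matrices whose support is contained in the union of the blocks I_a × I_b with B_{a,b} = 1. -/
open Filter

/-!
Contracting each `t × t` block of an avoiding `N × N` permutation matrix `A` to a single
entry gives an `n × n` matrix `B` whose blocks cover the support of `A`, so `A` is counted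
in `|L_t(B)|`. `B` still avoids `P`: from a copy of the permutation pattern `P` in `B`, pick
in each of the chosen blocks a one of `A`; since blocks are ordered like their indices and
`P` has a single one per row and column, these ones form a copy of `P` in `A`.
-/

lemma blockOf_monotone {t n : ℕ} (ht : 0 < t) : Monotone (blockOf (n := n) ht) :=
  fun _ _ hij => Fin.mk_le_mk.mpr (Nat.div_le_div_right hij)

lemma contMat_blockOf {t n : ℕ} (ht : 0 < t) {A : Matrix (Fin (t * n)) (Fin (t * n)) Bool}
    {i j : Fin (t * n)} (hA : A i j = true) :
    contMat ht A (blockOf ht i) (blockOf ht j) = true := by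
  simpa only [contMat, decide_eq_true_eq] using ⟨i, j, rfl, rfl, hA⟩

lemma Contains.of_monotone_cover {k m n : ℕ} {P : Matrix (Fin k) (Fin k) Bool}
    (hP : IsPermMatrix P) {A : Matrix (Fin m) (Fin m) Bool} {B : Matrix (Fin n) (Fin n) Bool}
    {f : Fin m → Fin n} (hf : Monotone f)
    (hcover : ∀ a b, B a b = true → ∃ i j, f i = a ∧ f j = b ∧ A i j = true)
    (hB : Contains P B) : Contains P A := by
  obtain ⟨σ, rfl⟩ := hP
  obtain ⟨r, c, hr, hc, hdom⟩ := hB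
  choose x y hx hy hA using fun i => hcover (r i) (c (σ i)) (hdom i (σ i) (decide_eq_true rfl))
  refine ⟨x, fun j => y (σ.symm j), fun i i' hii' => ?_, fun j j' hjj' => ?_, ?_⟩
  · exact hf.reflect_lt (by simpa only [hx] using hr hii')
  · exact hf.reflect_lt (by simpa only [hy, Equiv.apply_symm_apply] using hc hjj')
  · rintro i _ hij
    obtain rfl : σ i = _ := of_decide_eq_true hij
    simpa only [Equiv.symm_apply_apply] using hA i

lemma Contains.of_contMat {k t n : ℕ} {P : Matrix (Fin k) (Fin k) Bool} (hP : IsPermMatrix P)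
    (ht : 0 < t) {A : Matrix (Fin (t * n)) (Fin (t * n)) Bool}
    (h : Contains P (contMat ht A)) : Contains P A :=
  h.of_monotone_cover hP (blockOf_monotone ht) fun _ _ hab => by
    simpa only [contMat, decide_eq_true_eq] using hab

lemma Avoids.contMat {k t n : ℕ} {P : Matrix (Fin k) (Fin k) Bool} (hP : IsPermMatrix P)
    (ht : 0 < t) {A : Matrix (Fin (t * n)) (Fin (t * n)) Bool} (hA : Avoids P A) :
    Avoids P (contMat ht A) :=
  fun h => hA (h.of_contMat hP ht)

open Classical in
theorem SW_le_sum_lifts_general {k : ℕ} (P : Matrix (Fin k) (Fin k) Bool)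
    (hP : IsPermMatrix P) (t n : ℕ) (ht : 0 < t) :
    SW P (t * n) ≤
      ∑ B ∈ Finset.univ.filter (fun B : Matrix (Fin n) (Fin n) Bool => Avoids P B),
        Nat.card {A : Matrix (Fin (t * n)) (Fin (t * n)) Bool //
          IsPermMatrix A ∧
            ∀ i j, A i j = true → B (blockOf ht i) (blockOf ht j) = true} := by
  simp only [SW, Nat.card_eq_fintype_card, Fintype.card_subtype]
  refine (Finset.card_le_card fun A hA => ?_).trans Finset.card_biUnion_le
  obtain ⟨hperm, havoid⟩ := (Finset.mem_filter.mp hA).2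
  exact Finset.mem_biUnion.mpr ⟨contMat ht A,
    Finset.mem_filter.mpr ⟨Finset.mem_univ _, havoid.contMat hP ht⟩,
    Finset.mem_filter.mpr ⟨Finset.mem_univ _, hperm, fun _ _ => contMat_blockOf ht⟩⟩

open Classical in
theorem SW_le_sum_lifts {k : ℕ} (P : Matrix (Fin k) (Fin k) Bool)
    (hP : IsPermMatrix P) (t n : ℕ) (ht : 0 < t) (hn : 0 < n) :
    SW P (t * n) ≤
      ∑ B ∈ Finset.univ.filter (fun B : Matrix (Fin n) (Fin n) Bool => Avoids P B),
        Nat.card {A : Matrix (Fin (t * n)) (Fin (t * n)) Bool //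
          IsPermMatrix A ∧
            ∀ i j, A i j = true → B (blockOf ht i) (blockOf ht j) = true} :=
  SW_le_sum_lifts_general P hP t n ht
end
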